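/- Let Γ be a finite simple graph with n vertices where n is even, and let {v} be a one-vertex graph with vertex set disjoint from that of Γ. Then Lights Out is universally solvable on the graph join Γ + {v} if and only if Lights Out is universally solvable on Γ. -/

import Mathlib

open scoped Classical in
/-- The neighborhood matrix of a finite simple graph over the field `ZMod 2`:
the entry at `(i, j)` is `1` if `i = j` or `i` and `j` are adjacent, and `0` otherwise. -/
noncomputable def nbhdMatrix {V : Type} [Fintype V] [DecidableEq V] (G : SimpleGraph V) :
    Matrix V V (ZMod 2) :=
  Matrix.of fun i j => if i = j ∨ G.Adj i j then 1 else 0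

/-- Lights Out is universally solvable on a finite simple graph iff its neighborhood
matrix over `ZMod 2` is invertible. -/
def UniversallySolvable {V : Type} [Fintype V] [DecidableEq V] (G : SimpleGraph V) : Prop :=
  IsUnit (nbhdMatrix G)

/-- The graph join of two graphs on disjoint vertex sets: it contains all edges of both
graphs together with an edge between every vertex of the first and every vertex of the
second. -/
def graphJoin {V W : Type} (G : SimpleGraph V) (H : SimpleGraph W) : SimpleGraph (V ⊕ W) where
  Adj := fun
    | .inl a, .inl b => G.Adj a b
    | .inr a, .inr b => H.Adj a b
    | .inl _, .inr _ => True
    | .inr _, .inl _ => True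
  symm := ⟨by
    rintro (a | a) (b | b) h
    · exact G.adj_symm h
    · trivial
    · trivial
    · exact H.adj_symm h⟩
  loopless := ⟨by
    rintro (a | a) h
    · exact G.irrefl h
    · exact H.irrefl h⟩

namespace LightsOutAux

open Matrix Finset

local notation "F" => ZMod 2

lemma F_add_self : ∀ a : F, a + a = 0 := by decide
lemma F_mul_self : ∀ a : F, a * a = a := by decide
lemma F_ne_zero' : ∀ a : F, a ≠ 0 → a = 1 := by decide
lemma F_ne_zero {a : F} (h : a ≠ 0) : a = 1 := F_ne_zero' a h

lemma matrix_add_self {m n : Type} (A : Matrix m n F) : A + A = 0 := by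
  ext i j; exact F_add_self _

/-- The quadratic form of a symmetric matrix over `𝔽₂` reduces to its diagonal. -/
lemma quad {V : Type} [Fintype V] (B : Matrix V V F) (hB : B.IsSymm) (x : V → F) :
    x ⬝ᵥ (B *ᵥ x) = ∑ i, B i i * x i := by
  classical
  have expand : x ⬝ᵥ (B *ᵥ x) = ∑ p ∈ (univ : Finset V) ×ˢ univ, x p.1 * B p.1 p.2 * x p.2 := by
    rw [Finset.sum_product]
    simp only [dotProduct, mulVec, dotProduct, Finset.mul_sum]
    congr 1; ext i; congr 1; ext j; ring
  have h0 : ∑ p ∈ (univ : Finset V).offDiag, x p.1 * B p.1 p.2 * x p.2 = 0 := by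
    refine Finset.sum_involution (fun p _ => Prod.swap p) ?_ ?_ ?_ ?_
    · intro p hp
      have h : x p.2 * B p.2 p.1 * x p.1 = x p.1 * B p.1 p.2 * x p.2 := by
        rw [hB.apply]; ring
      show x p.1 * B p.1 p.2 * x p.2 + x p.2 * B p.2 p.1 * x p.1 = 0
      rw [h]; exact F_add_self _
    · intro p hp _ hcon
      have h12 : p.1 ≠ p.2 := (Finset.mem_offDiag.mp hp).2.2
      exact h12 (congrArg Prod.snd hcon)
    · intro p hp
      rcases Finset.mem_offDiag.mp hp with ⟨_, _, hne⟩
      exact Finset.mem_offDiag.mpr ⟨Finset.mem_univ _, Finset.mem_univ _, fun h => hne h.symm⟩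
    · intro p _; rfl
  rw [expand, ← Finset.diag_union_offDiag (univ : Finset V),
    Finset.sum_union (Finset.disjoint_diag_offDiag _), Finset.sum_diag, h0, add_zero]
  refine Finset.sum_congr rfl fun i _ => ?_
  calc x i * B i i * x i = B i i * (x i * x i) := by ring
  _ = B i i * x i := by rw [F_mul_self]

/-- `σ(B) = d(B)ᵀ B⁻¹ d(B)` where `d(B)` is the diagonal of `B`. -/
noncomputable def sig {V : Type} [Fintype V] [DecidableEq V] (B : Matrix V V F) : F :=
  Matrix.diag B ⬝ᵥ (B⁻¹ *ᵥ Matrix.diag B)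

lemma diag_congr {V : Type} [Fintype V] [DecidableEq V] (C Q : Matrix V V F)
    (hC : C.IsSymm) : Matrix.diag (Qᵀ * C * Q) = Matrix.diag C ᵥ* Q := by
  ext i
  have h : Matrix.diag (Qᵀ * C * Q) i = (fun k => Q k i) ⬝ᵥ (C *ᵥ fun k => Q k i) := by
    simp only [Matrix.diag, Matrix.mul_apply, dotProduct, mulVec, dotProduct,
      Matrix.transpose_apply, Finset.sum_mul, Finset.mul_sum]
    refine Finset.sum_congr rfl fun j _ => Finset.sum_congr rfl fun k _ => ?_
    rw [hC.apply j k]; ring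
  rw [h, quad C hC]
  simp only [vecMul, dotProduct, Matrix.diag]

lemma sig_congr {V : Type} [Fintype V] [DecidableEq V] (C Q : Matrix V V F)
    (hC : C.IsSymm) (hCu : IsUnit C) (hQu : IsUnit Q) : sig (Qᵀ * C * Q) = sig C := by
  have hQd : IsUnit Q.det := (Matrix.isUnit_iff_isUnit_det Q).mp hQu
  have hinv : (Qᵀ * C * Q)⁻¹ = Q⁻¹ * (C⁻¹ * (Qᵀ)⁻¹) := by
    rw [Matrix.mul_inv_rev, Matrix.mul_inv_rev]
  unfold sig
  rw [diag_congr C Q hC, hinv]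
  have h1 : (Qᵀ)⁻¹ = (Q⁻¹)ᵀ := (Matrix.transpose_nonsing_inv Q).symm
  have hmv : (Q⁻¹ * (C⁻¹ * (Qᵀ)⁻¹)) *ᵥ (Matrix.diag C ᵥ* Q)
      = Q⁻¹ *ᵥ (C⁻¹ *ᵥ Matrix.diag C) := by
    rw [← Matrix.mulVec_mulVec, ← Matrix.mulVec_mulVec, h1, Matrix.mulVec_transpose,
      Matrix.vecMul_vecMul, Matrix.mul_nonsing_inv _ hQd, Matrix.vecMul_one]
  rw [hmv, Matrix.dotProduct_mulVec, Matrix.vecMul_vecMul,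
    Matrix.mul_nonsing_inv _ hQd, Matrix.vecMul_one]

lemma sig_reindex {V W : Type} [Fintype V] [DecidableEq V] [Fintype W] [DecidableEq W]
    (B : Matrix V V F) (e : W ≃ V) : sig (B.submatrix e e) = sig B := by
  unfold sig
  have hd : Matrix.diag (B.submatrix e e) = Matrix.diag B ∘ e := rfl
  have hc : (Matrix.diag B ∘ e) ∘ e.symm = Matrix.diag B := by ext x; simp
  rw [hd, Matrix.inv_submatrix_equiv, Matrix.submatrix_mulVec_equiv, hc]
  simp only [dotProduct, Function.comp_apply]
  exact Equiv.sum_comp e fun j => Matrix.diag B j * (B⁻¹ *ᵥ Matrix.diag B) j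

lemma inv_blockDiag {P W : Type} [Fintype P] [DecidableEq P] [Fintype W] [DecidableEq W]
    (S : Matrix P P F) (D : Matrix W W F) (hS : IsUnit S) (hD : IsUnit D) :
    (Matrix.fromBlocks S 0 0 D)⁻¹ = Matrix.fromBlocks S⁻¹ 0 0 D⁻¹ := by
  apply Matrix.inv_eq_right_inv
  rw [Matrix.fromBlocks_multiply]
  simp only [Matrix.mul_zero, Matrix.zero_mul, add_zero, zero_add,
    Matrix.mul_nonsing_inv _ ((Matrix.isUnit_iff_isUnit_det S).mp hS),
    Matrix.mul_nonsing_inv _ ((Matrix.isUnit_iff_isUnit_det D).mp hD)]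
  exact Matrix.fromBlocks_one

lemma sig_blockDiag {P W : Type} [Fintype P] [DecidableEq P] [Fintype W] [DecidableEq W]
    (S : Matrix P P F) (D : Matrix W W F) (hS : IsUnit S) (hD : IsUnit D) :
    sig (Matrix.fromBlocks S 0 0 D) = sig S + sig D := by
  unfold sig
  have hd : Matrix.diag (Matrix.fromBlocks S 0 0 D)
      = Sum.elim (Matrix.diag S) (Matrix.diag D) := by
    ext (i | i) <;> rfl
  rw [hd, inv_blockDiag S D hS hD, Matrix.fromBlocks_mulVec]
  simp only [Matrix.zero_mulVec, add_zero, zero_add, sumElim_dotProduct_sumElim,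
    Sum.elim_comp_inl, Sum.elim_comp_inr]

/-- Splitting off an invertible symmetric corner block by a congruence. -/
lemma sig_schur {P W : Type} [Fintype P] [DecidableEq P] [Fintype W] [DecidableEq W]
    (S : Matrix P P F) (C : Matrix W P F) (D : Matrix W W F)
    (hS : S.IsSymm) (hD : D.IsSymm) (hSu : IsUnit S)
    (hBu : IsUnit (Matrix.fromBlocks S Cᵀ C D)) :
    sig (Matrix.fromBlocks S Cᵀ C D) = sig S + sig (D + C * S⁻¹ * Cᵀ)
      ∧ IsUnit (D + C * S⁻¹ * Cᵀ) ∧ (D + C * S⁻¹ * Cᵀ).IsSymm := by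
  have hSd : IsUnit S.det := (Matrix.isUnit_iff_isUnit_det S).mp hSu
  have hSinv : (S⁻¹)ᵀ = S⁻¹ := by rw [Matrix.transpose_nonsing_inv, hS.eq]
  have hD2s : (D + C * S⁻¹ * Cᵀ).IsSymm := by
    show _ᵀ = _
    rw [Matrix.transpose_add, hD.eq, Matrix.transpose_mul, Matrix.transpose_mul,
      Matrix.transpose_transpose, hSinv, ← Matrix.mul_assoc]
  have key : ∀ X Y : Matrix W W F, X + (Y + X) = Y := by
    intro X Y; rw [add_comm Y X, ← add_assoc, matrix_add_self, zero_add]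
  have hQT : (Matrix.fromBlocks (1 : Matrix P P F) (S⁻¹ * Cᵀ) 0 (1 : Matrix W W F))ᵀ
      = Matrix.fromBlocks 1 0 (C * S⁻¹) 1 := by
    rw [Matrix.fromBlocks_transpose, Matrix.transpose_one, Matrix.transpose_one,
      Matrix.transpose_zero, Matrix.transpose_mul, hSinv, Matrix.transpose_transpose]
  set Q := Matrix.fromBlocks (1 : Matrix P P F) (S⁻¹ * Cᵀ) 0 (1 : Matrix W W F) with hQ
  have hfact : Qᵀ * (Matrix.fromBlocks S 0 0 (D + C * S⁻¹ * Cᵀ)) * Q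
      = Matrix.fromBlocks S Cᵀ C D := by
    rw [hQT, hQ, Matrix.fromBlocks_multiply, Matrix.fromBlocks_multiply]
    simp only [Matrix.mul_one, Matrix.one_mul, Matrix.mul_zero, Matrix.zero_mul,
      add_zero, zero_add, Matrix.mul_assoc, Matrix.nonsing_inv_mul S hSd]
    rw [Matrix.mul_nonsing_inv_cancel_left S Cᵀ hSd, key]
  have hQu : IsUnit Q := by
    rw [Matrix.isUnit_iff_isUnit_det, hQ, Matrix.det_fromBlocks_zero₂₁,
      Matrix.det_one, Matrix.det_one, mul_one]
    exact isUnit_one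
  have hMs : (Matrix.fromBlocks S 0 0 (D + C * S⁻¹ * Cᵀ)).IsSymm := by
    show _ᵀ = _
    rw [Matrix.fromBlocks_transpose, Matrix.transpose_zero, Matrix.transpose_zero,
      hS.eq, hD2s.eq]
  have hMu : IsUnit (Matrix.fromBlocks S 0 0 (D + C * S⁻¹ * Cᵀ)) := by
    have h1 : IsUnit (Qᵀ * Matrix.fromBlocks S 0 0 (D + C * S⁻¹ * Cᵀ) * Q).det := by
      rw [hfact]; exact (Matrix.isUnit_iff_isUnit_det _).mp hBu
    rw [Matrix.det_mul, Matrix.det_mul] at h1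
    exact (Matrix.isUnit_iff_isUnit_det _).mpr (IsUnit.mul_iff.mp (IsUnit.mul_iff.mp h1).1).2
  have hD2u : IsUnit (D + C * S⁻¹ * Cᵀ) := by
    have h2 := (Matrix.isUnit_iff_isUnit_det _).mp hMu
    rw [Matrix.det_fromBlocks_zero₂₁] at h2
    exact (Matrix.isUnit_iff_isUnit_det _).mpr (IsUnit.mul_iff.mp h2).2
  have hSu' : IsUnit S := hSu
  refine ⟨?_, hD2u, hD2s⟩
  rw [← hfact, sig_congr _ _ hMs hMu hQu,
    sig_blockDiag S (D + C * S⁻¹ * Cᵀ) hSu' hD2u]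

lemma sig_one {P : Type} [Fintype P] [DecidableEq P] :
    sig (1 : Matrix P P F) = (Fintype.card P : F) := by
  unfold sig
  have hi : (1 : Matrix P P F)⁻¹ = 1 := Matrix.inv_eq_right_inv (mul_one 1)
  rw [hi, Matrix.one_mulVec]
  have hd : Matrix.diag (1 : Matrix P P F) = fun _ => 1 := by
    ext i; simp [Matrix.diag, Matrix.one_apply_eq]
  rw [hd]
  simp [dotProduct, Finset.card_univ]

/-- The inductive step: splitting off a pivot block given by a predicate `p`. -/
lemma sig_step {V : Type} [Fintype V] [DecidableEq V] (B : Matrix V V F)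
    (hB : B.IsSymm) (hU : IsUnit B) (p : V → Prop) [DecidablePred p]
    (hex : ∃ x, p x)
    (hSu : IsUnit (Matrix.of fun i j : {x // p x} => B i j))
    (hSsig : sig (Matrix.of fun i j : {x // p x} => B i j) = (Fintype.card {x // p x} : F))
    (IH : ∀ (W : Type) [Fintype W] [DecidableEq W], Fintype.card W < Fintype.card V →
      ∀ B' : Matrix W W F, B'.IsSymm → IsUnit B' → sig B' = (Fintype.card W : F)) :
    sig B = (Fintype.card V : F) := by
  classical
  let e : {x // p x} ⊕ {x // ¬ p x} ≃ V := Equiv.sumCompl p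
  let S : Matrix {x // p x} {x // p x} F := Matrix.of fun i j => B i j
  let C : Matrix {x // ¬ p x} {x // p x} F := Matrix.of fun i j => B i j
  let D : Matrix {x // ¬ p x} {x // ¬ p x} F := Matrix.of fun i j => B i j
  have hsub : B.submatrix e e = Matrix.fromBlocks S Cᵀ C D := by
    ext (i | i) (j | j)
    · rfl
    · exact (hB.apply _ _).symm
    · rfl
    · rfl
  have hSs : S.IsSymm := Matrix.IsSymm.ext fun i j => hB.apply _ _
  have hDs : D.IsSymm := Matrix.IsSymm.ext fun i j => hB.apply _ _
  have hsubU : IsUnit (Matrix.fromBlocks S Cᵀ C D) := by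
    rw [← hsub]; exact (Matrix.isUnit_submatrix_equiv e e).mpr hU
  obtain ⟨hsig, hD2u, hD2s⟩ := sig_schur S C D hSs hDs hSu hsubU
  have hre : sig B = sig (Matrix.fromBlocks S Cᵀ C D) := by
    rw [← hsub, sig_reindex]
  have hcard : Fintype.card V = Fintype.card {x // p x} + Fintype.card {x // ¬ p x} := by
    rw [← Fintype.card_sum, Fintype.card_congr e]
  have hPpos : 0 < Fintype.card {x // p x} := by
    obtain ⟨x, hx⟩ := hex
    exact Fintype.card_pos_iff.mpr ⟨⟨x, hx⟩⟩
  have hWlt : Fintype.card {x // ¬ p x} < Fintype.card V := by omega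
  rw [hre, hsig, hSsig, IH _ hWlt _ hD2s hD2u, hcard]
  push_cast
  ring

lemma F_two : ((2 : ℕ) : F) = 0 := by decide

/-- Main theorem: for an invertible symmetric matrix over `𝔽₂`, the value of the inverse
quadratic form at the diagonal equals the dimension mod 2. -/
lemma sig_eq_card_aux : ∀ (n : ℕ) (V : Type) [Fintype V] [DecidableEq V],
    Fintype.card V ≤ n → ∀ B : Matrix V V F, B.IsSymm → IsUnit B →
    sig B = (Fintype.card V : F) := by
  intro n
  induction n with
  | zero =>
    intro V _ _ hc B hB hU
    have h0 : Fintype.card V = 0 := Nat.le_zero.mp hc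
    have : IsEmpty V := Fintype.card_eq_zero_iff.mp h0
    rw [h0]
    unfold sig
    simp [dotProduct]
  | succ n ih =>
    intro V _ _ hc B hB hU
    by_cases hcn : Fintype.card V ≤ n
    · exact ih V hcn B hB hU
    · have hceq : Fintype.card V = n + 1 := by omega
      have hIH : ∀ (W : Type) [Fintype W] [DecidableEq W],
          Fintype.card W < Fintype.card V →
          ∀ B' : Matrix W W F, B'.IsSymm → IsUnit B' → sig B' = (Fintype.card W : F) := by
        intro W _ _ hlt B' h1 h2
        exact ih W (by omega) B' h1 h2
      by_cases hd : ∃ k, B k k = 1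
      · obtain ⟨k, hk⟩ := hd
        refine sig_step B hB hU (fun x => x = k ∨ x = k) ⟨k, Or.inl rfl⟩ ?_ ?_ hIH
        · have hS1 : (Matrix.of fun i j : {x // x = k ∨ x = k} => B i j) = 1 := by
            ext i j
            have hik : (i : V) = k := i.2.elim id id
            have hjk : (j : V) = k := j.2.elim id id
            have hij : i = j := Subtype.ext (hik.trans hjk.symm)
            subst hij
            rw [Matrix.one_apply_eq]
            show B i i = 1
            rw [hik]
            exact hk
          rw [hS1]
          exact isUnit_one
        · have hS1 : (Matrix.of fun i j : {x // x = k ∨ x = k} => B i j) = 1 := by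
            ext i j
            have hik : (i : V) = k := i.2.elim id id
            have hjk : (j : V) = k := j.2.elim id id
            have hij : i = j := Subtype.ext (hik.trans hjk.symm)
            subst hij
            rw [Matrix.one_apply_eq]
            show B i i = 1
            rw [hik]
            exact hk
          rw [hS1]
          exact sig_one
      · push_neg at hd
        have hall0 : ∀ a : F, a ≠ 1 → a = 0 := by decide
        have hd0 : ∀ x, B x x = 0 := fun x => hall0 _ (hd x)
        have hpos : 0 < Fintype.card V := by omega
        obtain ⟨i⟩ : Nonempty V := Fintype.card_pos_iff.mp hpos
        have hrow : ∃ j, B i j ≠ 0 := by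
          by_contra h
          push_neg at h
          have hdet : B.det = 0 := Matrix.det_eq_zero_of_row_eq_zero i h
          rw [Matrix.isUnit_iff_isUnit_det, hdet] at hU
          exact not_isUnit_zero hU
        obtain ⟨j, hj⟩ := hrow
        have hBij : B i j = 1 := F_ne_zero hj
        have hij : i ≠ j := by
          intro h
          subst h
          rw [hd0 i] at hBij
          exact zero_ne_one hBij
        refine sig_step B hB hU (fun x => x = i ∨ x = j) ⟨i, Or.inl rfl⟩ ?_ ?_ hIH
        all_goals {
          set p : V → Prop := fun x => x = i ∨ x = j with hp
          set S := (Matrix.of fun a b : {x // p x} => B a b) with hS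
          have hSoff : ∀ a b : {x // p x}, a ≠ b → S a b = 1 := by
            intro a b hne
            have hab : (a : V) ≠ (b : V) := fun h => hne (Subtype.ext h)
            have ha' := a.2
            have hb' := b.2
            show B (a : V) (b : V) = 1
            rcases ha' with h1 | h1 <;> rcases hb' with h2 | h2
            · exact absurd (h1.trans h2.symm) hab
            · rw [h1, h2]; exact hBij
            · rw [h1, h2, hB.apply]; exact hBij
            · exact absurd (h1.trans h2.symm) hab
          have hSdiag : ∀ a : {x // p x}, S a a = 0 := fun a => hd0 a
          have hcP : Fintype.card {x // p x} = 2 := by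
            rw [Fintype.card_subtype]
            have hfil : Finset.filter p Finset.univ = {i, j} := by
              ext x
              simp [hp, Finset.mem_insert, Finset.mem_singleton]
            rw [hfil, Finset.card_insert_of_notMem (by simp [hij]), Finset.card_singleton]
          have e2 : Fin 2 ≃ {x // p x} := (Fintype.equivFinOfCardEq hcP).symm
          have hdetS : IsUnit S.det := by
            rw [← Matrix.det_submatrix_equiv_self e2 S, Matrix.det_fin_two]
            have hne : e2 0 ≠ e2 1 := fun h => by
              have := e2.injective h
              exact absurd this (by decide)
            simp only [Matrix.submatrix_apply]
            rw [hSdiag (e2 0), hSdiag (e2 1), hSoff _ _ hne, hSoff _ _ (Ne.symm hne)]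
            simp
          first
          | exact (Matrix.isUnit_iff_isUnit_det S).mpr hdetS
          | { have hdg : Matrix.diag S = 0 := by ext a; exact hSdiag a
              unfold sig
              rw [hdg, hcP, F_two]
              simp [dotProduct] }
        }

lemma sig_eq_card {V : Type} [Fintype V] [DecidableEq V] (B : Matrix V V F)
    (hB : B.IsSymm) (hU : IsUnit B) : sig B = (Fintype.card V : F) :=
  sig_eq_card_aux (Fintype.card V) V le_rfl B hB hU

/-- Determinant of `B + J` (all-ones matrix) for invertible `B`. -/
lemma det_addJ {V : Type} [Fintype V] [DecidableEq V] (B : Matrix V V F) (hU : IsUnit B) :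
    (B + Matrix.of fun _ _ => (1 : F)).det
      = B.det * (1 + (fun _ => (1 : F)) ⬝ᵥ (B⁻¹ *ᵥ fun _ => (1 : F))) := by
  have hBd : IsUnit B.det := (Matrix.isUnit_iff_isUnit_det B).mp hU
  set u : V → F := B⁻¹ *ᵥ fun _ => (1 : F) with hu
  have hBu : B *ᵥ u = fun _ => (1 : F) := by
    rw [hu, Matrix.mulVec_mulVec, Matrix.mul_nonsing_inv _ hBd, Matrix.one_mulVec]
  have hJ : B * (Matrix.replicateCol (Fin 1) u * Matrix.replicateRow (Fin 1) fun _ : V => (1 : F))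
      = Matrix.of fun (_ : V) (_ : V) => (1 : F) := by
    rw [← Matrix.mul_assoc]
    ext i j
    have h1 : (B * Matrix.replicateCol (Fin 1) u * Matrix.replicateRow (Fin 1) fun _ : V => (1 : F)) i j
        = ∑ _t : Fin 1, (∑ k, B i k * u k) * 1 := by
      simp [Matrix.mul_apply, Matrix.replicateCol_apply, Matrix.replicateRow_apply]
    rw [h1]
    have h2 : (∑ k, B i k * u k) = (B *ᵥ u) i := rfl
    simp only [Finset.univ_unique, Finset.sum_singleton, mul_one, h2, hBu]
    rfl
  have hfac : B + Matrix.of (fun (_ : V) (_ : V) => (1 : F))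
      = B * (1 + Matrix.replicateCol (Fin 1) u * Matrix.replicateRow (Fin 1) fun _ : V => (1 : F)) := by
    rw [Matrix.mul_add, Matrix.mul_one, hJ]
  rw [hfac, Matrix.det_mul]
  exact congrArg (B.det * ·) (Matrix.det_one_add_replicateCol_mul_replicateRow (ι := Fin 1) _ _)

lemma even_cast_zero {n : ℕ} (h : Even n) : (n : F) = 0 := by
  obtain ⟨m, rfl⟩ := h
  push_cast
  exact F_add_self _

end LightsOutAux

open LightsOutAux in
open scoped Matrix in
/-- If `Γ` has an even number of vertices, then Lights Out is universally solvable on the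
graph join `Γ + {v}` of `Γ` with a one-vertex graph if and only if it is universally
solvable on `Γ`. -/
theorem universallySolvable_join_vertex_iff_of_even {V : Type} [Fintype V] [DecidableEq V]
    (G : SimpleGraph V) (heven : Even (Fintype.card V)) :
    UniversallySolvable (graphJoin G (⊥ : SimpleGraph (Fin 1))) ↔ UniversallySolvable G := by
  classical
  set N := nbhdMatrix G with hN
  have hNs : N.IsSymm := by
    refine Matrix.IsSymm.ext fun i j => ?_
    simp only [hN, nbhdMatrix, Matrix.of_apply]
    have : (j = i ∨ G.Adj j i) ↔ (i = j ∨ G.Adj i j) := by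
      constructor
      · rintro (rfl | h)
        · exact Or.inl rfl
        · exact Or.inr (G.adj_symm h)
      · rintro (rfl | h)
        · exact Or.inl rfl
        · exact Or.inr (G.adj_symm h)
    simp [this]
  have hNd : ∀ i, N i i = 1 := fun i => by simp [hN, nbhdMatrix]
  set Jm := (Matrix.of fun (_ : V) (_ : V) => (1 : ZMod 2)) with hJ
  have hJs : Jm.transpose = Jm := rfl
  have hM : nbhdMatrix (graphJoin G (⊥ : SimpleGraph (Fin 1)))
      = Matrix.fromBlocks N (Matrix.of fun _ _ => (1 : ZMod 2))
        (Matrix.of fun _ _ => (1 : ZMod 2)) 1 := by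
    ext (a | a) (b | b)
    · simp only [nbhdMatrix, Matrix.of_apply, Matrix.fromBlocks_apply₁₁, hN]
      by_cases h : a = b ∨ G.Adj a b
      · rw [if_pos h, if_pos (show Sum.inl a = Sum.inl b
          ∨ (graphJoin G (⊥ : SimpleGraph (Fin 1))).Adj (Sum.inl a) (Sum.inl b)
          from h.imp (congrArg Sum.inl) id)]
      · rw [if_neg h, if_neg (show ¬(Sum.inl a = Sum.inl b
          ∨ (graphJoin G (⊥ : SimpleGraph (Fin 1))).Adj (Sum.inl a) (Sum.inl b))
          from fun hc => h (hc.imp (fun e => Sum.inl_injective e) id))]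
    · simp only [nbhdMatrix, Matrix.of_apply, Matrix.fromBlocks_apply₁₂]
      rw [if_pos (show Sum.inl a = Sum.inr b
        ∨ (graphJoin G (⊥ : SimpleGraph (Fin 1))).Adj (Sum.inl a) (Sum.inr b)
        from Or.inr trivial)]
    · simp only [nbhdMatrix, Matrix.of_apply, Matrix.fromBlocks_apply₂₁]
      rw [if_pos (show Sum.inr a = Sum.inl b
        ∨ (graphJoin G (⊥ : SimpleGraph (Fin 1))).Adj (Sum.inr a) (Sum.inl b)
        from Or.inr trivial)]
    · simp only [nbhdMatrix, Matrix.of_apply, Matrix.fromBlocks_apply₂₂]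
      have hab : a = b := Subsingleton.elim a b
      subst hab
      rw [if_pos (Or.inl rfl), Matrix.one_apply_eq]
  have hprodJ : (Matrix.of fun (_ : V) (_ : Fin 1) => (1 : ZMod 2))
      * (Matrix.of fun (_ : Fin 1) (_ : V) => (1 : ZMod 2)) = Jm := by
    ext i j
    simp [Matrix.mul_apply, hJ]
  have hNJ : N - Jm = N + Jm := by
    have hnegJ : -Jm = Jm := by
      ext i j
      simp only [Matrix.neg_apply, hJ, Matrix.of_apply]
      decide
    rw [sub_eq_add_neg, hnegJ]
  rw [UniversallySolvable, UniversallySolvable, hM, Matrix.isUnit_iff_isUnit_det,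
    Matrix.isUnit_iff_isUnit_det, Matrix.det_fromBlocks_one₂₂, hprodJ, hNJ, ← hN]
  constructor
  · -- IsUnit det (N + Jm) → IsUnit det N
    intro h
    set B := N + Jm with hB
    have hBs : B.IsSymm := by
      show B.transpose = B
      rw [hB, Matrix.transpose_add, hNs.eq, hJs]
    have hBu : IsUnit B := (Matrix.isUnit_iff_isUnit_det B).mpr h
    have hBd : IsUnit B.det := h
    have hzero : (fun _ => (1 : ZMod 2)) ⬝ᵥ (B⁻¹ *ᵥ fun _ => (1 : ZMod 2)) = 0 := by
      set z := B⁻¹ *ᵥ fun _ => (1 : ZMod 2) with hz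
      have hBz : B *ᵥ z = fun _ => (1 : ZMod 2) := by
        rw [hz, Matrix.mulVec_mulVec, Matrix.mul_nonsing_inv _ hBd, Matrix.one_mulVec]
      have hdiag0 : ∀ i, B i i = 0 := fun i => by
        show N i i + Jm i i = 0
        rw [hNd i]
        exact F_add_self 1
      calc (fun _ => (1 : ZMod 2)) ⬝ᵥ z = (B *ᵥ z) ⬝ᵥ z := by rw [hBz]
        _ = z ⬝ᵥ (B *ᵥ z) := dotProduct_comm _ _
        _ = ∑ i, B i i * z i := quad B hBs z
        _ = 0 := by
            refine Finset.sum_eq_zero fun i _ => ?_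
            rw [hdiag0 i, zero_mul]
    have hdet : (B + Jm).det = B.det * (1 + 0) := by
      rw [det_addJ B hBu, hzero]
    have hBJ : B + Jm = N := by
      rw [hB, add_assoc, matrix_add_self, add_zero]
    rw [hBJ] at hdet
    rw [hdet]
    simpa using h
  · -- IsUnit det N → IsUnit det (N + Jm)
    intro h
    have hNu : IsUnit N := (Matrix.isUnit_iff_isUnit_det N).mpr h
    have hdiagN : Matrix.diag N = fun _ => (1 : ZMod 2) := by
      ext i; exact hNd i
    have hsig : (fun _ => (1 : ZMod 2)) ⬝ᵥ (N⁻¹ *ᵥ fun _ => (1 : ZMod 2)) = 0 := by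
      have := sig_eq_card N hNs hNu
      unfold LightsOutAux.sig at this
      rw [hdiagN] at this
      rw [this]
      exact even_cast_zero heven
    rw [det_addJ N hNu, hsig]
    simpa using h
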